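/- arXiv:1103.1819 — 2 statements merged into one kernel-verified Lean document; each statement's English description precedes it below -/
import Mathlib

section
/- Let $f : (0,1] \to (0,\infty)$ be nonincreasing with $f \le 1$ and $f(1) \ge v > 0$. Fix $0 < \gamma < 1$, $n \in \mathbb{N}$, $\delta > 0$. Then the number of indices $i \ge n$ such that $\log(f(\gamma^i)/f(\gamma^{i-n})) > \delta$ is at most $(n+1)\cdot \delta^{-1} \cdot \log(1/v)$. -/
open Real Finset

/-- Quantitative differentiation pigeonhole: for a nonincreasing `f : (0,1] → (0,∞)`
with `f ≤ 1` and `f(1) ≥ v > 0`, the number of indices `i ≥ n` with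
`log(f(γ^i)/f(γ^{i-n})) > δ` is at most `(n+1) δ⁻¹ log(1/v)`. -/

theorem stmt_4
    (f : ℝ → ℝ) (v : ℝ) (hv : 0 < v)
    (hpos : ∀ r, 0 < r → r ≤ 1 → 0 < f r)
    (hle1 : ∀ r, 0 < r → r ≤ 1 → f r ≤ 1)
    (hmono : ∀ r s, 0 < r → r ≤ s → s ≤ 1 → f s ≤ f r)
    (hf1 : v ≤ f 1)
    (γ : ℝ) (hγ : 0 < γ) (hγ1 : γ < 1)
    (n : ℕ) (δ : ℝ) (hδ : 0 < δ)
    (E : Finset ℕ)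
    (hE : ∀ i ∈ E, n ≤ i ∧ δ < Real.log (f (γ ^ i)) - Real.log (f (γ ^ (i - n)))) :
    (E.card : ℝ) ≤ (n + 1) * δ⁻¹ * Real.log (1 / v) := by
  classical
  set g : ℕ → ℝ := fun j => Real.log (f (γ ^ j)) with hgdef
  have hpow : ∀ j : ℕ, 0 < γ ^ j ∧ γ ^ j ≤ 1 := fun j =>
    ⟨pow_pos hγ j, pow_le_one₀ hγ.le hγ1.le⟩
  have hgmono : ∀ j k : ℕ, j ≤ k → g j ≤ g k := by
    intro j k hjk
    exact Real.log_le_log (hpos _ (hpow j).1 (hpow j).2)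
      (hmono _ _ (hpow k).1 (pow_le_pow_of_le_one hγ.le hγ1.le hjk) (hpow j).2)
  have hgle : ∀ j, g j ≤ 0 := fun j =>
    Real.log_nonpos (hpos _ (hpow j).1 (hpow j).2).le (hle1 _ (hpow j).1 (hpow j).2)
  have hg0 : Real.log v ≤ g 0 := by
    have : g 0 = Real.log (f 1) := by simp [hgdef]
    rw [this]
    exact Real.log_le_log hv hf1
  have hL : Real.log (1 / v) = -Real.log v := by rw [one_div, Real.log_inv]
  set d : ℕ → ℝ := fun j => g (j + 1) - g j with hddef
  have hd0 : ∀ j, 0 ≤ d j := fun j => sub_nonneg.2 (hgmono j (j + 1) (Nat.le_succ j))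
  -- key lemma for a set of indices in a single residue class
  have key : ∀ S : Finset ℕ, S ⊆ E →
      (∀ i ∈ S, ∀ i' ∈ S, i % (n + 1) = i' % (n + 1)) →
      (S.card : ℝ) * δ ≤ Real.log (1 / v) := by
    intro S hSE hcong
    have hSn : ∀ i ∈ S, n ≤ i ∧ δ < g i - g (i - n) := fun i hi => hE i (hSE hi)
    have hgap : ∀ i ∈ S, ∀ i' ∈ S, i < i' → i + n + 1 ≤ i' := by
      intro i hi i' hi' hlt
      have hd : (n + 1) ∣ i' - i :=
        (Nat.modEq_iff_dvd' hlt.le).1 (hcong i hi i' hi')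
      have := Nat.le_of_dvd (by omega) hd
      omega
    have hdisj : (S : Set ℕ).PairwiseDisjoint (fun i => Finset.Ico (i - n) i) := by
      intro i hi i' hi' hne
      simp only [Finset.mem_coe] at hi hi'
      rcases lt_or_gt_of_ne hne with h | h
      · have := hgap i hi i' hi' h
        have hn' := (hSn i hi).1
        simp only [Function.onFun]
        rw [Finset.disjoint_left]
        intro j hj hj'
        simp only [Finset.mem_Ico] at hj hj'
        omega
      · have := hgap i' hi' i hi h
        have hn' := (hSn i' hi').1
        simp only [Function.onFun]
        rw [Finset.disjoint_left]
        intro j hj hj'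
        simp only [Finset.mem_Ico] at hj hj'
        omega
    have hterm : ∀ i ∈ S, g i - g (i - n) = ∑ j ∈ Finset.Ico (i - n) i, d j := by
      intro i hi
      rw [Finset.sum_Ico_eq_sub _ (Nat.sub_le i n), Finset.sum_range_sub, Finset.sum_range_sub]
      ring
    have h1 : (S.card : ℝ) * δ ≤ ∑ i ∈ S, (g i - g (i - n)) := by
      have := Finset.card_nsmul_le_sum S (fun i => g i - g (i - n)) δ
        (fun i hi => (hSn i hi).2.le)
      simpa [nsmul_eq_mul] using this
    have h2 : ∑ i ∈ S, (g i - g (i - n)) =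
        ∑ j ∈ S.biUnion (fun i => Finset.Ico (i - n) i), d j := by
      rw [Finset.sum_biUnion hdisj]
      exact Finset.sum_congr rfl hterm
    set N := S.sup id with hN
    have hsub : S.biUnion (fun i => Finset.Ico (i - n) i) ⊆ Finset.range N := by
      intro j hj
      rcases Finset.mem_biUnion.1 hj with ⟨i, hi, hji⟩
      simp only [Finset.mem_Ico] at hji
      have : i ≤ N := Finset.le_sup (f := id) hi
      simp only [Finset.mem_range]
      omega
    have h3 : ∑ j ∈ S.biUnion (fun i => Finset.Ico (i - n) i), d j ≤
        ∑ j ∈ Finset.range N, d j :=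
      Finset.sum_le_sum_of_subset_of_nonneg hsub (fun j _ _ => hd0 j)
    have h4 : ∑ j ∈ Finset.range N, d j = g N - g 0 := Finset.sum_range_sub g N
    have h5 : g N - g 0 ≤ Real.log (1 / v) := by
      rw [hL]
      have := hgle N
      linarith
    linarith [h1, h2 ▸ h1, h3, h4 ▸ h3]
  have hv1 : v ≤ 1 := hf1.trans (hle1 1 one_pos le_rfl)
  have hLpos : 0 ≤ Real.log (1 / v) := Real.log_nonneg (one_le_one_div hv hv1)
  -- pigeonhole over residues mod n+1
  set c : ℕ → ℕ := fun r => (E.filter (fun i => i % (n + 1) = r)).card with hcdef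
  obtain ⟨r, hr, hmax⟩ := Finset.exists_max_image (Finset.range (n + 1)) c
    ⟨0, Finset.mem_range.2 (Nat.succ_pos n)⟩
  have hcard : E.card = ∑ r ∈ Finset.range (n + 1), c r :=
    Finset.card_eq_sum_card_fiberwise (fun i _ => Finset.mem_range.2 (Nat.mod_lt i (Nat.succ_pos n)))
  have hEle : E.card ≤ (n + 1) * c r := by
    calc E.card = ∑ r' ∈ Finset.range (n + 1), c r' := hcard
      _ ≤ (Finset.range (n + 1)).card • c r :=
        Finset.sum_le_card_nsmul _ _ _ (fun r' hr' => hmax r' hr')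
      _ = (n + 1) * c r := by simp [smul_eq_mul]
  set S := E.filter (fun i => i % (n + 1) = r) with hSdef
  have hkey : (S.card : ℝ) * δ ≤ Real.log (1 / v) := by
    apply key S (Finset.filter_subset _ _)
    intro i hi i' hi'
    rw [hSdef, Finset.mem_filter] at hi hi'
    rw [hi.2, hi'.2]
  have hScard : (S.card : ℝ) ≤ δ⁻¹ * Real.log (1 / v) := by
    rw [inv_mul_eq_div, le_div_iff₀ hδ]
    exact hkey
  have hcast : (E.card : ℝ) ≤ (n + 1) * (S.card : ℝ) := by
    exact_mod_cast hEle
  calc (E.card : ℝ) ≤ (n + 1) * (S.card : ℝ) := hcast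
    _ ≤ (n + 1) * (δ⁻¹ * Real.log (1 / v)) := by
        apply mul_le_mul_of_nonneg_left hScard (by positivity)
    _ = (n + 1) * δ⁻¹ * Real.log (1 / v) := by ring
end

section
/- Cone-splitting for metric cones: let $C(\bar Z)$ be a metric cone with vertex $\bar z^*$, of the form $\mathbb{R}^\ell \times C(Z)$ (isometric splitting, with vertex set $\mathbb{R}^\ell \times \{z^*\}$). Suppose there is a metric cone $C(\hat Z)$ with vertex $\hat z^*$ and an isometry $I : \mathbb{R}^\ell \times C(Z) \to C(\hat Z)$ with $I^{-1}(\hat z^*) = y' \notin \mathbb{R}^\ell \times \{z^*\}$. Then there is a line in $\mathbb{R}^\ell \times C(Z)$ passing through $y'$ and a point of $\mathbb{R}^\ell \times \{z^*\}$, namely the line through the two distinct cone vertices; more precisely, for any two points $p \ne q$ of a metric space each of which is the vertex of a metric cone structure on the space, the geodesic through $p$ and $q$ extends to a line (an isometric embedding of $\mathbb{R}$). -/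
/-- `IsConeVertex X v` : `X` carries a metric cone structure with vertex `v`;
i.e. there are a metric space `Z` with `diam Z ≤ π` and a parametrization
`f : [0,∞) × Z → X` (onto, collapsing `{0} × Z` to `v`) realizing the cone metric
`d(f(r₁,z₁), f(r₂,z₂))² = r₁² + r₂² - 2 r₁ r₂ cos d_Z(z₁,z₂)`. -/
def IsConeVertex (X : Type*) [MetricSpace X] (v : X) : Prop :=
  ∃ (Z : Type) (_ : MetricSpace Z),
    (∀ z z' : Z, dist z z' ≤ Real.pi) ∧
    ∃ f : ℝ × Z → X,
      (∀ z : Z, f (0, z) = v) ∧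
      (∀ p q : ℝ × Z, 0 ≤ p.1 → 0 ≤ q.1 →
        dist (f p) (f q) ^ 2 =
          p.1 ^ 2 + q.1 ^ 2 - 2 * p.1 * q.1 * Real.cos (dist p.2 q.2)) ∧
      (∀ x : X, ∃ p : ℝ × Z, 0 ≤ p.1 ∧ f p = x)

private lemma sq_eq_of_sq_eq' {a b : ℝ} (ha : 0 ≤ a) (hb : 0 ≤ b) (h : a ^ 2 = b ^ 2) :
    a = b := by
  calc a = Real.sqrt (a ^ 2) := (Real.sqrt_sq ha).symm
    _ = Real.sqrt (b ^ 2) := by rw [h]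
    _ = b := Real.sqrt_sq hb

/-- Cone-splitting, key geometric fact: if `p ≠ q` are both vertices of metric cone
structures on `X`, then there is a line (an isometric embedding of `ℝ`) passing
through `p` and `q`. -/
theorem stmt_15 {X : Type*} [MetricSpace X] (p q : X) (hpq : p ≠ q)
    (hp : IsConeVertex X p) (hq : IsConeVertex X q) :
    ∃ L : ℝ → X, Isometry L ∧ L 0 = p ∧ L (dist p q) = q := by
  obtain ⟨Z, _, hZd, f, hf0, hfd, hfs⟩ := hp
  obtain ⟨W, _, hWd, g, hg0, hgd, hgs⟩ := hq
  have hd0 : 0 < dist p q := dist_pos.2 hpq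
  set d := dist p q with hd
  -- distances along a fixed ray of the `p`-cone
  have keyf : ∀ (s t : ℝ) (z : Z), 0 ≤ s → 0 ≤ t →
      dist (f (s, z)) (f (t, z)) = |s - t| := by
    intro s t z hs ht
    apply sq_eq_of_sq_eq' dist_nonneg (abs_nonneg _)
    have h := hfd (s, z) (t, z) hs ht
    dsimp only at h
    rw [dist_self, Real.cos_zero] at h
    rw [sq_abs, h]; ring
  -- distances along a fixed ray of the `q`-cone
  have keyg : ∀ (s t : ℝ) (w : W), 0 ≤ s → 0 ≤ t →
      dist (g (s, w)) (g (t, w)) = |s - t| := by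
    intro s t w hs ht
    apply sq_eq_of_sq_eq' dist_nonneg (abs_nonneg _)
    have h := hgd (s, w) (t, w) hs ht
    dsimp only at h
    rw [dist_self, Real.cos_zero] at h
    rw [sq_abs, h]; ring
  -- write q on a ray from p
  obtain ⟨⟨a, z₀⟩, ha, hfa⟩ := hfs q
  have had : d = a := by
    have h := keyf 0 a z₀ le_rfl ha
    rw [hf0, hfa, zero_sub, abs_neg, abs_of_nonneg ha] at h
    exact h
  rw [← had] at hfa
  -- write p on a ray from q
  obtain ⟨⟨b, w₀⟩, hb, hgb⟩ := hgs p
  have hbd : d = b := by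
    have h := keyg 0 b w₀ le_rfl hb
    rw [hg0, hgb, zero_sub, abs_neg, abs_of_nonneg hb, dist_comm] at h
    exact h
  rw [← hbd] at hgb
  -- the key mixed-case distance computation
  have mixed : ∀ t : ℝ, t < 0 → ∀ s : ℝ, 0 ≤ s →
      dist (f (s, z₀)) (g (d - t, w₀)) = s - t := by
    intro t ht s hs
    obtain ⟨⟨ρ, ζ⟩, hρ, hfρ⟩ := hfs (g (d - t, w₀))
    -- ρ = -t
    have hρt : ρ = -t := by
      have h1 := keyf 0 ρ ζ le_rfl hρ
      rw [hf0, hfρ, zero_sub, abs_neg, abs_of_nonneg hρ] at h1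
      have h2 := keyg d (d - t) w₀ hd0.le (by linarith)
      rw [hgb] at h2
      rw [show d - (d - t) = t from by ring, abs_of_nonpos ht.le] at h2
      rw [h1] at h2
      exact h2
    subst hρt
    -- compute the cosine: the two rays from p make angle π
    have hq2 := keyg 0 (d - t) w₀ le_rfl (by linarith)
    rw [hg0, zero_sub, abs_neg, abs_of_nonneg (by linarith : (0:ℝ) ≤ d - t)] at hq2
    have h3 := hfd (d, z₀) (-t, ζ) hd0.le (by linarith)
    dsimp only at h3
    rw [hfa, hfρ, hq2] at h3
    have hc : Real.cos (dist z₀ ζ) = -1 := by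
      have hdt : 0 < d * (-t) := mul_pos hd0 (by linarith)
      have hprod : d * (-t) * (1 + Real.cos (dist z₀ ζ)) = 0 := by
        linear_combination h3 / 2
      rcases mul_eq_zero.mp hprod with h | h
      · exact absurd h hdt.ne'
      · linarith
    have h4 := hfd (s, z₀) (-t, ζ) hs (by linarith)
    dsimp only at h4
    rw [hfρ] at h4
    apply sq_eq_of_sq_eq' dist_nonneg (by linarith)
    rw [h4, hc]; ring
  -- assemble the line
  refine ⟨fun t => if 0 ≤ t then f (t, z₀) else g (d - t, w₀), ?_, ?_, ?_⟩
  · apply Isometry.of_dist_eq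
    intro x y
    rcases le_or_gt 0 x with hx | hx <;> rcases le_or_gt 0 y with hy | hy
    · simp only [if_pos hx, if_pos hy]
      rw [keyf x y z₀ hx hy, Real.dist_eq]
    · simp only [if_pos hx, if_neg (not_le.2 hy)]
      rw [mixed y hy x hx, Real.dist_eq, abs_of_nonneg (by linarith)]
    · simp only [if_neg (not_le.2 hx), if_pos hy]
      rw [dist_comm, mixed x hx y hy, Real.dist_eq, abs_of_nonpos (by linarith)]
      ring
    · simp only [if_neg (not_le.2 hx), if_neg (not_le.2 hy)]
      rw [keyg (d - x) (d - y) w₀ (by linarith) (by linarith), Real.dist_eq]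
      rw [show d - x - (d - y) = y - x from by ring, abs_sub_comm]
  · simp only [if_pos le_rfl]
    exact hf0 z₀
  · simp only [if_pos hd0.le]
    exact hfa
end
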